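/- The group O⁺(2,1)(ℤ), together with the generating triple (r₀, r₁, r₂) = (Ref_{H−E₁−E₂}, Ref_{E₁−E₂}, Ref_{E₂}), is a Coxeter system whose Coxeter matrix M satisfies M(i,i) = 1 for all i, M(0,1) = 2, M(1,2) = 4, and M(0,2) = ∞; that is, O⁺(2,1)(ℤ) is isomorphic, via a map carrying the simple generators to r₀, r₁, r₂, to the triangle group Δ(2,4,∞) with presentation ⟨s₀, s₁, s₂ ∣ s₀² = s₁² = s₂² = (s₀s₁)² = (s₁s₂)⁴ = 1⟩, where s₀s₂ has infinite order. -/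

import Mathlib

open Matrix

/-- The symmetric bilinear form `Q(x,y) = x₀y₀ − x₁y₁ − x₂y₂` on `ℤ³`. -/
def Q3 (x y : Fin 3 → ℤ) : ℤ := x 0 * y 0 - x 1 * y 1 - x 2 * y 2

/-- The Gram matrix `J = diag(1,−1,−1)` of `Q3`. -/
def J3 : Matrix (Fin 3) (Fin 3) ℤ := Matrix.diagonal ![1, -1, -1]

/-- The matrix of the reflection `w ↦ w − (2·Q(v,w)/Q(v,v))·v` about `v`. -/
def reflMat3 (v : Fin 3 → ℤ) : Matrix (Fin 3) (Fin 3) ℤ :=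
  Matrix.of fun i j => (if i = j then 1 else 0) - 2 * Q3 v (Pi.single j 1) / Q3 v v * v i

/-- `r₀ = Ref_{H−E₁−E₂}` as an element of `GL(3,ℤ)`. -/
def refHE1E2 : (Matrix (Fin 3) (Fin 3) ℤ)ˣ :=
  ⟨reflMat3 ![1, -1, -1], reflMat3 ![1, -1, -1], by decide, by decide⟩

/-- `r₁ = Ref_{E₁−E₂}` as an element of `GL(3,ℤ)`. -/
def refE1E2 : (Matrix (Fin 3) (Fin 3) ℤ)ˣ :=
  ⟨reflMat3 ![0, 1, -1], reflMat3 ![0, 1, -1], by decide, by decide⟩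

/-- `r₂ = Ref_{E₂}` as an element of `GL(3,ℤ)`. -/
def refE2 : (Matrix (Fin 3) (Fin 3) ℤ)ˣ :=
  ⟨reflMat3 ![0, 0, 1], reflMat3 ![0, 0, 1], by decide, by decide⟩

/-- The set `O⁺(2,1)(ℤ)` of elements of `GL(3,ℤ)` preserving `J` and with positive
`(0,0)` entry. -/
def Oplus21 : Set (Matrix (Fin 3) (Fin 3) ℤ)ˣ :=
  {A | (A : Matrix (Fin 3) (Fin 3) ℤ)ᵀ * J3 * (A : Matrix (Fin 3) (Fin 3) ℤ) = J3 ∧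
    0 < (A : Matrix (Fin 3) (Fin 3) ℤ) 0 0}

/-- The Coxeter matrix of the triangle group `Δ(2,4,∞)`, with `0` encoding `∞`. -/
def triangleMatrix : CoxeterMatrix (Fin 3) where
  M := Matrix.of ![![1, 2, 0], ![2, 1, 4], ![0, 4, 1]]
  off_diagonal := by
    intro i i' h
    fin_cases i <;> fin_cases i' <;> first | exact absurd rfl h | (simp; done) | decide


/-!
Injectivity is a ping-pong argument. The Coxeter group is the amalgam of the dihedral group
`D₈ = ⟨s₁, s₂⟩` and `⟨s₀, s₁⟩ ≅ C₂ × C₂` over `⟨s₁⟩`, so every element is `d · u` with `d ∈ D₈`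
and either `u = 1` or `u = s₀ d₁ s₀ d₂ ⋯ s₀ dₖ` with `dᵢ ∈ D₈` and `d₁, …, dₖ₋₁ ∉ ⟨s₁⟩`. The mirror
of `r₀` cuts the future light cone into two halves, which `r₀` swaps; `D₈` fixes `H`, and every
element of `D₈ ∖ ⟨s₁⟩` maps the half not containing `H` into the half containing `H`. Hence such a
`u` moves `H` into the far half, so `d · u ≠ 1`, while `D₈` embeds by the same ping-pong step.

Surjectivity is a descent on the `(0,0)` entry. If `A₀₀ ≥ 2`, the first column `(a, p, q)` of `A`
satisfies `a² = 1 + p² + q²`, so `p, q ≠ 0` and `a < |p| + |q|`; after an element of `D₈` makes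
`p, q` negative, `r₀` lowers the entry to `3a − 2|p| − 2|q| < a`. The matrices with `A₀₀ = 1` are
the eight signed permutations of `E₁, E₂`, the image of `D₈`.

Finally `r₀ r₂` is unipotent: `(r₀ r₂)ⁿ H = (1 + 2n², −2n², −2n)`.
-/

local notation "GL₃" => (Matrix (Fin 3) (Fin 3) ℤ)ˣ

lemma Q3_eq_dotProduct (x y : Fin 3 → ℤ) : Q3 x y = x ⬝ᵥ (J3 *ᵥ y) := by
  simp [Q3, J3, dotProduct, Fin.sum_univ_three, mulVec_diagonal]; ring

lemma Q3_mulVec_mulVec {A : Matrix (Fin 3) (Fin 3) ℤ} (hA : Aᵀ * J3 * A = J3)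
    (x y : Fin 3 → ℤ) : Q3 (A *ᵥ x) (A *ᵥ y) = Q3 x y := by
  rw [Q3_eq_dotProduct, Q3_eq_dotProduct, mulVec_mulVec, ← vecMul_transpose, dotProduct_mulVec,
    vecMul_vecMul, ← Matrix.mul_assoc, hA, ← dotProduct_mulVec]

lemma entry_relation {A : Matrix (Fin 3) (Fin 3) ℤ} (hA : Aᵀ * J3 * A = J3) (i j : Fin 3) :
    A 0 i * A 0 j - A 1 i * A 1 j - A 2 i * A 2 j = J3 i j := by
  rw [← hA]; simp [Matrix.mul_apply, Fin.sum_univ_three, J3]; ring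

def futureCone : Set (Fin 3 → ℤ) := {x | 0 < x 0 ∧ 0 < Q3 x x}

lemma apply_zero_pos_of_Q3_pos {y z : Fin 3 → ℤ} (hy : 0 < Q3 y y) (hz : z ∈ futureCone)
    (hyz : 0 < Q3 y z) : 0 < y 0 := by
  obtain ⟨hz0, hzz⟩ := hz
  simp only [Q3] at *
  by_contra! hy0
  have hp : y 1 * z 1 + y 2 * z 2 < y 0 * z 0 := by linarith
  have hyz0 : y 0 * z 0 ≤ 0 := mul_nonpos_of_nonpos_of_nonneg hy0 hz0.le
  have h1 : (y 0 * z 0) ^ 2 < (y 1 * z 1 + y 2 * z 2) ^ 2 := by nlinarith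
  have h2 : (y 1 * z 1 + y 2 * z 2) ^ 2 ≤ (y 1 ^ 2 + y 2 ^ 2) * (z 1 ^ 2 + z 2 ^ 2) := by
    nlinarith [sq_nonneg (y 1 * z 2 - y 2 * z 1)]
  have h3 : (y 1 ^ 2 + y 2 ^ 2) * (z 1 ^ 2 + z 2 ^ 2) ≤ y 0 ^ 2 * z 0 ^ 2 :=
    mul_le_mul (by nlinarith) (by nlinarith) (by positivity) (by positivity)
  nlinarith

def e₀ : Fin 3 → ℤ := Pi.single 0 1

lemma mulVec_e₀ (A : Matrix (Fin 3) (Fin 3) ℤ) : A *ᵥ e₀ = fun i => A i 0 := by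
  ext i; simp [e₀]

lemma Q3_e₀ (x : Fin 3 → ℤ) : Q3 x e₀ = x 0 := by simp [Q3, e₀]

lemma mulVec_e₀_mem_futureCone {A : GL₃} (hA : A ∈ Oplus21) : A.val *ᵥ e₀ ∈ futureCone := by
  refine ⟨by simpa [mulVec_e₀] using hA.2, ?_⟩
  rw [Q3_mulVec_mulVec hA.1, Q3_e₀]; simp [e₀]

lemma mulVec_mem_futureCone {A : GL₃} (hA : A ∈ Oplus21) {x : Fin 3 → ℤ}
    (hx : x ∈ futureCone) : A.val *ᵥ x ∈ futureCone := by
  have hQ : Q3 (A.val *ᵥ x) (A.val *ᵥ x) = Q3 x x := Q3_mulVec_mulVec hA.1 x x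
  refine ⟨apply_zero_pos_of_Q3_pos (hQ ▸ hx.2) (mulVec_e₀_mem_futureCone hA) ?_, hQ ▸ hx.2⟩
  rw [Q3_mulVec_mulVec hA.1, Q3_e₀]; exact hx.1

lemma mul_mem_Oplus21 {A B : GL₃} (hA : A ∈ Oplus21) (hB : B ∈ Oplus21) : A * B ∈ Oplus21 := by
  refine ⟨?_, ?_⟩
  · calc (A.val * B.val)ᵀ * J3 * (A.val * B.val) = B.valᵀ * (A.valᵀ * J3 * A.val) * B.val := by
          simp only [transpose_mul, Matrix.mul_assoc]
      _ = J3 := by rw [hA.1, hB.1]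
  · have := (mulVec_mem_futureCone hA (mulVec_e₀_mem_futureCone hB)).1
    rwa [mulVec_mulVec, mulVec_e₀] at this

def α₀ : Fin 3 → ℤ := ![1, -1, -1]

lemma refHE1E2_mulVec (x : Fin 3 → ℤ) : refHE1E2.val *ᵥ x = x + (2 * Q3 α₀ x) • α₀ := by
  ext i; fin_cases i <;>
    simp [refHE1E2, reflMat3, Q3, α₀, mulVec, dotProduct, Fin.sum_univ_three] <;> ring

lemma refE1E2_val : refE1E2.val = !![1, 0, 0; 0, 0, 1; 0, 1, 0] := by decide

lemma refE2_val : refE2.val = !![1, 0, 0; 0, 1, 0; 0, 0, -1] := by decide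

lemma refE1E2_mulVec (x : Fin 3 → ℤ) : refE1E2.val *ᵥ x = ![x 0, x 2, x 1] := by
  rw [refE1E2_val]; ext i; fin_cases i <;> simp [mulVec, dotProduct, Fin.sum_univ_three]

lemma refE2_mulVec (x : Fin 3 → ℤ) : refE2.val *ᵥ x = ![x 0, x 1, -x 2] := by
  rw [refE2_val]; ext i; fin_cases i <;> simp [mulVec, dotProduct, Fin.sum_univ_three]

def futureConePos : Set (Fin 3 → ℤ) := {x | x ∈ futureCone ∧ 0 < Q3 α₀ x}

def futureConeNeg : Set (Fin 3 → ℤ) := {x | x ∈ futureCone ∧ Q3 α₀ x < 0}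

lemma refHE1E2_mapsTo_futureConePos :
    Set.MapsTo (refHE1E2.val *ᵥ ·) futureConePos futureConeNeg := by
  intro x ⟨hx, hα⟩
  refine ⟨mulVec_mem_futureCone ⟨by decide, by decide⟩ hx, ?_⟩
  have hQ : Q3 α₀ (refHE1E2.val *ᵥ x) = - Q3 α₀ x := by
    rw [refHE1E2_mulVec]; simp [Q3, α₀]; ring
  linarith

lemma futureConeNeg_coords {y : Fin 3 → ℤ} (hy : y ∈ futureConeNeg) :
    y 1 < 0 ∧ y 2 < 0 ∧ 0 < y 0 + y 1 ∧ 0 < y 0 + y 2 := by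
  obtain ⟨⟨h0, hQ⟩, hα⟩ := hy
  simp only [Q3, α₀, Matrix.cons_val] at hQ hα
  refine ⟨?_, ?_, ?_, ?_⟩ <;> nlinarith

lemma lt_abs_add_abs {a p q : ℤ} (ha : 2 ≤ a) (h : a * a - p * p - q * q = 1) :
    a < |p| + |q| := by
  have no_sq_succ (r : ℤ) (hr : 0 ≤ r) (hra : r ≤ a) (h : a * a - r * r = 1) : False := by
    rcases (show r = a ∨ r + 1 ≤ a by omega) with rfl | hr1
    · simp at h
    · nlinarith
  by_contra! hle
  have hP := abs_nonneg p
  have hQ := abs_nonneg q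
  rw [← abs_mul_abs_self p, ← abs_mul_abs_self q] at h
  have : |p| * |q| = 0 := by nlinarith
  rcases mul_eq_zero.mp this with h0 | h0
  · exact no_sq_succ |q| hQ (by linarith) (by rw [h0] at h; linarith)
  · exact no_sq_succ |p| hP (by linarith) (by rw [h0] at h; linarith)

lemma signedPerm_cases {a b c d : ℤ} (hab : a * a + b * b = 1) (hcd : c * c + d * d = 1)
    (h : a * c + b * d = 0) :
    (b = 0 ∧ c = 0 ∧ (a = 1 ∨ a = -1) ∧ (d = 1 ∨ d = -1)) ∨
      (a = 0 ∧ d = 0 ∧ (b = 1 ∨ b = -1) ∧ (c = 1 ∨ c = -1)) := by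
  have : -1 ≤ a := by nlinarith
  have : a ≤ 1 := by nlinarith
  have : -1 ≤ b := by nlinarith
  have : b ≤ 1 := by nlinarith
  have : -1 ≤ c := by nlinarith
  have : c ≤ 1 := by nlinarith
  have : -1 ≤ d := by nlinarith
  have : d ≤ 1 := by nlinarith
  interval_cases a <;> interval_cases b <;> interval_cases c <;> interval_cases d <;> omega

lemma refHE1E2_mul_refE2_pow_mulVec_e₀ (n : ℕ) :
    ((refHE1E2 * refE2) ^ n).val *ᵥ e₀ =
      ![1 + 2 * (n : ℤ) ^ 2, -2 * (n : ℤ) ^ 2, -2 * (n : ℤ)] := by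
  induction n with
  | zero => ext i; fin_cases i <;> simp [e₀]
  | succ n ih =>
    rw [pow_succ', Units.val_mul, ← mulVec_mulVec, ih, Units.val_mul, ← mulVec_mulVec,
      refE2_mulVec, refHE1E2_mulVec]
    ext i; fin_cases i <;> simp [Q3, α₀] <;> ring

lemma not_isOfFinOrder_refHE1E2_mul_refE2 : ¬ IsOfFinOrder (refHE1E2 * refE2) := by
  rw [isOfFinOrder_iff_pow_eq_one]
  rintro ⟨n, hn, hpow⟩
  have := congrFun (refHE1E2_mul_refE2_pow_mulVec_e₀ n) 2
  simp [hpow, e₀] at this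
  omega

namespace TriangleGroup

local notation "W" => triangleMatrix.Group

def cs : CoxeterSystem triangleMatrix W := triangleMatrix.toCoxeterSystem

local notation "s" => CoxeterSystem.simple cs

lemma simple_zero_mul_simple_one : s 0 * s 1 = s 1 * s 0 := by
  have h : s 0 * s 1 * (s 0 * s 1) = 1 := by
    rw [← pow_two]; exact cs.simple_mul_simple_pow 0 1
  rw [← inv_eq_of_mul_eq_one_right h, _root_.mul_inv_rev, cs.inv_simple, cs.inv_simple]

def rot : W := s 1 * s 2

lemma rot_pow_four : rot ^ 4 = 1 := cs.simple_mul_simple_pow 1 2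

lemma simple_one_mul_rot_pow (k : ℕ) : s 1 * rot ^ k = rot ^ (3 * k) * s 1 := by
  have h : SemiconjBy (s 1) rot (rot ^ 3) := by
    rw [SemiconjBy, ← mul_inv_cancel_right (rot ^ 3) rot, ← pow_succ, rot_pow_four, one_mul, rot,
      _root_.mul_inv_rev, cs.inv_simple, cs.inv_simple, mul_assoc, cs.simple_mul_simple_self,
      mul_one, ← mul_assoc, cs.simple_mul_simple_self, one_mul]
  rw [(h.pow_right k).eq, pow_mul]

def dihedral : Subgroup W := Subgroup.closure {s 1, s 2}

lemma simple_one_mem_dihedral : s 1 ∈ dihedral := Subgroup.subset_closure (by simp)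

lemma simple_two_mem_dihedral : s 2 ∈ dihedral := Subgroup.subset_closure (by simp)

lemma rot_mem_dihedral : rot ∈ dihedral := mul_mem simple_one_mem_dihedral simple_two_mem_dihedral

lemma exists_eq_of_mem_dihedral {d : W} (hd : d ∈ dihedral) :
    ∃ k < 4, d = rot ^ k ∨ d = rot ^ k * s 1 := by
  suffices h : ∃ k : ℕ, d = rot ^ k ∨ d = rot ^ k * s 1 by
    obtain ⟨k, hk⟩ := h
    refine ⟨k % 4, Nat.mod_lt _ (by norm_num), ?_⟩
    rwa [← pow_eq_pow_mod k rot_pow_four]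
  have rot_mul : ∀ d : W, (∃ k : ℕ, d = rot ^ k ∨ d = rot ^ k * s 1) →
      ∃ k : ℕ, rot * d = rot ^ k ∨ rot * d = rot ^ k * s 1 := by
    rintro d ⟨k, rfl | rfl⟩
    · exact ⟨k + 1, Or.inl (pow_succ' rot k).symm⟩
    · exact ⟨k + 1, Or.inr (by rw [← mul_assoc, ← pow_succ'])⟩
  have s1_mul : ∀ d : W, (∃ k : ℕ, d = rot ^ k ∨ d = rot ^ k * s 1) →
      ∃ k : ℕ, s 1 * d = rot ^ k ∨ s 1 * d = rot ^ k * s 1 := by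
    rintro d ⟨k, rfl | rfl⟩
    · exact ⟨3 * k, Or.inr (simple_one_mul_rot_pow k)⟩
    · exact ⟨3 * k, Or.inl (by rw [← mul_assoc, simple_one_mul_rot_pow, mul_assoc,
        cs.simple_mul_simple_self, mul_one])⟩
  have gen_mul : ∀ x ∈ ({s 1, s 2} : Set W), ∀ d : W,
      (∃ k : ℕ, d = rot ^ k ∨ d = rot ^ k * s 1) →
      ∃ k : ℕ, x * d = rot ^ k ∨ x * d = rot ^ k * s 1 := by
    rintro x (rfl | rfl) d hd
    · exact s1_mul d hd
    · rw [show s 2 = s 1 * rot by rw [rot, ← mul_assoc, cs.simple_mul_simple_self, one_mul],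
        mul_assoc]
      exact s1_mul _ (rot_mul d hd)
  induction hd using Subgroup.closure_induction_left with
  | one => exact ⟨0, Or.inl (pow_zero rot).symm⟩
  | mul_left x hx d _ ih => exact gen_mul x hx d ih
  | inv_mul_cancel x hx d _ ih =>
    obtain ⟨i, rfl⟩ : ∃ i, s i = x := by rcases hx with rfl | rfl <;> exact ⟨_, rfl⟩
    rw [cs.inv_simple]
    exact gen_mul _ hx d ih

def reflections : Fin 3 → GL₃ := ![refHE1E2, refE1E2, refE2]

lemma isLiftable_reflections : triangleMatrix.IsLiftable reflections := by
  intro i j; fin_cases i <;> fin_cases j <;> decide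

def rep : W →* GL₃ := cs.lift ⟨reflections, isLiftable_reflections⟩

lemma rep_simple (i : Fin 3) : rep (s i) = reflections i :=
  cs.lift_apply_simple isLiftable_reflections i

lemma rep_simple_zero : rep (s 0) = refHE1E2 := rep_simple 0

lemma rep_simple_one : rep (s 1) = refE1E2 := rep_simple 1

lemma rep_simple_two : rep (s 2) = refE2 := rep_simple 2

lemma rep_rot_val : (rep rot).val = !![1, 0, 0; 0, 0, -1; 0, 1, 0] := by
  rw [rot, map_mul, rep_simple_one, rep_simple_two]; decide

lemma rep_rot_mulVec (x : Fin 3 → ℤ) : (rep rot).val *ᵥ x = ![x 0, -x 2, x 1] := by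
  rw [rep_rot_val]; ext i; fin_cases i <;> simp [mulVec, dotProduct, Fin.sum_univ_three]

lemma rep_mem_Oplus21 (w : W) : rep w ∈ Oplus21 := by
  induction w using cs.simple_induction_left with
  | one => exact ⟨by decide, by decide⟩
  | mul_simple_left w i hw =>
    rw [map_mul, rep_simple]
    refine mul_mem_Oplus21 ?_ hw
    fin_cases i <;> exact ⟨by decide, by decide⟩

lemma rep_mulVec_e₀_of_mem_dihedral {d : W} (hd : d ∈ dihedral) : (rep d).val *ᵥ e₀ = e₀ := by
  induction hd using Subgroup.closure_induction with
  | mem x hx =>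
    rcases hx with rfl | rfl
    · rw [rep_simple_one, refE1E2_mulVec]; decide
    · rw [rep_simple_two, refE2_mulVec]; decide
  | one => simp
  | mul x y _ _ hx hy => rw [map_mul, Units.val_mul, ← mulVec_mulVec, hy, hx]
  | inv x _ hx =>
    conv_lhs => rw [← hx]
    rw [mulVec_mulVec, ← Units.val_mul, ← map_mul, inv_mul_cancel, map_one, Units.val_one,
      one_mulVec]

lemma rep_mapsTo_futureConeNeg {d : W} (hd : d ∈ dihedral) (hd1 : d ∉ ({1, s 1} : Set W)) :
    Set.MapsTo ((rep d).val *ᵥ ·) futureConeNeg futureConePos := by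
  intro y hy
  refine ⟨mulVec_mem_futureCone (rep_mem_Oplus21 d) hy.1, ?_⟩
  obtain ⟨h1, h2, h3, h4⟩ := futureConeNeg_coords hy
  -- each of the six remaining elements negates at least one of the negative entries `y 1`, `y 2`
  obtain ⟨k, hk, rfl | rfl⟩ := exists_eq_of_mem_dihedral hd <;> interval_cases k <;>
    simp_all [← mulVec_mulVec, pow_succ, rep_rot_mulVec, rep_simple_one, refE1E2_mulVec, Q3, α₀] <;>
    linarith

inductive Alternating : W → Prop
  | simple_zero_mul {d : W} : d ∈ dihedral → Alternating (s 0 * d)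
  | simple_zero_mul_mul {d u : W} : d ∈ dihedral → d ∉ ({1, s 1} : Set W) → Alternating u →
      Alternating (s 0 * d * u)

lemma Alternating.rep_mulVec_e₀_mem {u : W} (hu : Alternating u) :
    (rep u).val *ᵥ e₀ ∈ futureConeNeg := by
  induction hu with
  | simple_zero_mul hd =>
    rw [map_mul, Units.val_mul, ← mulVec_mulVec, rep_mulVec_e₀_of_mem_dihedral hd, rep_simple_zero]
    exact refHE1E2_mapsTo_futureConePos ⟨⟨by decide, by decide⟩, by decide⟩
  | simple_zero_mul_mul hd hd1 _ ih =>
    rw [map_mul, map_mul, Units.val_mul, Units.val_mul, ← mulVec_mulVec, ← mulVec_mulVec,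
      rep_simple_zero]
    exact refHE1E2_mapsTo_futureConePos (rep_mapsTo_futureConeNeg hd hd1 ih)

def NormalForm (w : W) : Prop :=
  w ∈ dihedral ∨ ∃ d ∈ dihedral, ∃ u, Alternating u ∧ w = d * u

lemma NormalForm.mul_left {d w : W} (hd : d ∈ dihedral) (hw : NormalForm w) :
    NormalForm (d * w) := by
  rcases hw with hw | ⟨d', hd', u, hu, rfl⟩
  · exact Or.inl (mul_mem hd hw)
  · exact Or.inr ⟨d * d', mul_mem hd hd', u, hu, (mul_assoc _ _ _).symm⟩

lemma Alternating.normalForm_simple_zero_mul {u : W} (hu : Alternating u) :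
    NormalForm (s 0 * u) := by
  rcases hu with ⟨hd⟩ | ⟨hd, -, hu⟩
  · exact Or.inl (by rwa [cs.simple_mul_simple_cancel_left])
  · exact Or.inr ⟨_, hd, _, hu, by rw [mul_assoc, cs.simple_mul_simple_cancel_left]⟩

lemma NormalForm.simple_zero_mul {w : W} (hw : NormalForm w) : NormalForm (s 0 * w) := by
  rcases hw with hw | ⟨d, hd, u, hu, rfl⟩
  · exact Or.inr ⟨1, one_mem _, _, .simple_zero_mul hw, (one_mul _).symm⟩
  by_cases hd1 : d ∈ ({1, s 1} : Set W)
  · have hcomm : s 0 * d = d * s 0 := by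
      rcases hd1 with rfl | rfl
      · rw [mul_one, one_mul]
      · exact simple_zero_mul_simple_one
    rw [← mul_assoc, hcomm, mul_assoc]
    exact hu.normalForm_simple_zero_mul.mul_left hd
  · exact Or.inr ⟨1, one_mem _, _, .simple_zero_mul_mul hd hd1 hu, by rw [one_mul, mul_assoc]⟩

lemma normalForm (w : W) : NormalForm w := by
  induction w using cs.simple_induction_left with
  | one => exact Or.inl (one_mem _)
  | mul_simple_left w i hw =>
    fin_cases i
    · exact hw.simple_zero_mul
    · exact hw.mul_left simple_one_mem_dihedral
    · exact hw.mul_left simple_two_mem_dihedral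

lemma rep_injective : Function.Injective rep := by
  refine (injective_iff_map_eq_one rep).mpr fun w hw => ?_
  rcases normalForm w with hd | ⟨d, hd, u, hu, rfl⟩
  · by_contra hw1
    by_cases hs1 : w = s 1
    · rw [hs1, rep_simple_one] at hw; exact absurd hw (by decide)
    have hy := (Alternating.simple_zero_mul (one_mem dihedral)).rep_mulVec_e₀_mem
    have := rep_mapsTo_futureConeNeg hd (by simp [hw1, hs1]) hy
    simp only [hw, Units.val_one, one_mulVec] at this
    exact absurd this.2 (not_lt.mpr hy.2.le)
  · have hu' : rep u = rep d⁻¹ := by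
      rw [map_inv]; exact eq_inv_of_mul_eq_one_right (by rw [← map_mul, hw])
    have := hu.rep_mulVec_e₀_mem
    rw [hu', rep_mulVec_e₀_of_mem_dihedral (inv_mem hd)] at this
    exact absurd this.2 (by decide)

lemma mem_range_rep_of_apply_zero_zero_eq_one {A : GL₃} (hA : A ∈ Oplus21)
    (h1 : A.val 0 0 = 1) : A ∈ rep.range := by
  have rel (i j : Fin 3) := entry_relation hA.1 i j
  have r00 := rel 0 0; have r01 := rel 0 1; have r02 := rel 0 2
  have r11 := rel 1 1; have r12 := rel 1 2; have r22 := rel 2 2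
  rw [show J3 = !![1, 0, 0; 0, -1, 0; 0, 0, -1] by decide] at r00 r01 r02 r11 r12 r22
  simp only [h1, of_apply, cons_val, one_mul] at r00 r01 r02 r11 r12 r22
  have h10 : A.val 1 0 = 0 := by nlinarith
  have h20 : A.val 2 0 = 0 := by nlinarith
  simp only [h10, h20, zero_mul, sub_zero] at r01 r02
  have hA' : A.val = !![1, 0, 0; 0, A.val 1 1, A.val 1 2; 0, A.val 2 1, A.val 2 2] := by
    conv_lhs => rw [eta_fin_three A.val]
    rw [h1, h10, h20, r01, r02]
  simp only [r01, r02, zero_mul] at r11 r12 r22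
  rcases signedPerm_cases (a := A.val 1 1) (b := A.val 2 1) (c := A.val 1 2) (d := A.val 2 2)
      (by linarith) (by linarith) (by linarith) with
      ⟨hb, hc, ha | ha, hd | hd⟩ | ⟨ha, hd, hb | hb, hc | hc⟩ <;>
    rw [ha, hb, hc, hd] at hA' <;>
    [refine ⟨1, Units.ext ?_⟩; refine ⟨rot ^ 3 * s 1, Units.ext ?_⟩;
      refine ⟨rot * s 1, Units.ext ?_⟩; refine ⟨rot ^ 2, Units.ext ?_⟩;
      refine ⟨s 1, Units.ext ?_⟩; refine ⟨rot, Units.ext ?_⟩;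
      refine ⟨rot ^ 3, Units.ext ?_⟩; refine ⟨rot ^ 2 * s 1, Units.ext ?_⟩] <;>
    · rw [hA']
      simp only [map_mul, map_pow, map_one, Units.val_mul, Units.val_pow_eq_pow_val, Units.val_one,
        rep_rot_val, rep_simple_one, refE1E2_val] <;>
      decide

lemma exists_mem_dihedral_mulVec_eq (y : Fin 3 → ℤ) :
    ∃ d ∈ dihedral, (rep d).val *ᵥ y = ![y 0, -|y 1|, -|y 2|] := by
  rcases le_or_gt (y 1) 0 with h1 | h1 <;> rcases le_or_gt (y 2) 0 with h2 | h2
  · refine ⟨1, one_mem _, ?_⟩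
    ext i; fin_cases i <;> simp [abs_of_nonpos, h1, h2]
  · refine ⟨s 2, simple_two_mem_dihedral, ?_⟩
    ext i; fin_cases i <;> simp [rep_simple_two, refE2_mulVec, abs_of_nonpos, abs_of_pos, h1, h2]
  · refine ⟨rot * s 1, mul_mem rot_mem_dihedral simple_one_mem_dihedral, ?_⟩
    ext i; fin_cases i <;> simp [← mulVec_mulVec, rep_rot_mulVec, rep_simple_one, refE1E2_mulVec,
      abs_of_nonpos, abs_of_pos, h1, h2]
  · refine ⟨rot ^ 2, pow_mem rot_mem_dihedral 2, ?_⟩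
    ext i; fin_cases i <;> simp [pow_two, ← mulVec_mulVec, rep_rot_mulVec, abs_of_pos, h1, h2]

lemma exists_mem_range_apply_zero_zero_lt {A : GL₃} (hA : A ∈ Oplus21) (h2 : 2 ≤ A.val 0 0) :
    ∃ B ∈ rep.range, B * A ∈ Oplus21 ∧ (B * A).val 0 0 < A.val 0 0 := by
  obtain ⟨d, hd, hdy⟩ := exists_mem_dihedral_mulVec_eq (A.val *ᵥ e₀)
  refine ⟨rep (s 0 * d), ⟨_, rfl⟩, mul_mem_Oplus21 (rep_mem_Oplus21 _) hA, ?_⟩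
  have hcol : A.val 0 0 * A.val 0 0 - A.val 1 0 * A.val 1 0 - A.val 2 0 * A.val 2 0 = 1 := by
    simpa [J3] using entry_relation hA.1 0 0
  have hdesc : (rep (s 0 * d) * A).val 0 0 =
      A.val 0 0 + 2 * (A.val 0 0 - |A.val 1 0| - |A.val 2 0|) := by
    rw [← congrFun (mulVec_e₀ (rep (s 0 * d) * A).val) 0, map_mul, Units.val_mul, Units.val_mul,
      ← mulVec_mulVec, ← mulVec_mulVec, hdy, rep_simple_zero]
    simp [refHE1E2_mulVec, Q3, α₀, mulVec_e₀]
  linarith [lt_abs_add_abs h2 hcol]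

lemma mem_range_rep {A : GL₃} (hA : A ∈ Oplus21) : A ∈ rep.range := by
  induction hn : (A.val 0 0).toNat using Nat.strong_induction_on generalizing A with
  | _ n ih =>
    rcases (show A.val 0 0 = 1 ∨ 2 ≤ A.val 0 0 by have := hA.2; omega) with h1 | h2
    · exact mem_range_rep_of_apply_zero_zero_eq_one hA h1
    · obtain ⟨B, hB, hBA, hlt⟩ := exists_mem_range_apply_zero_zero_lt hA h2
      exact (Subgroup.mul_mem_cancel_left _ hB).mp (ih _ (by omega) hBA rfl)

lemma range_rep : Set.range rep = Oplus21 :=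
  (Set.range_subset_iff.mpr rep_mem_Oplus21).antisymm fun _ hA => mem_range_rep hA

end TriangleGroup

/-- `O⁺(2,1)(ℤ)` with the generators `(r₀, r₁, r₂) = (Ref_{H−E₁−E₂}, Ref_{E₁−E₂}, Ref_{E₂})`
is a Coxeter system of type `Δ(2,4,∞)`: there is an injective homomorphism from the Coxeter
group of `triangleMatrix` onto `O⁺(2,1)(ℤ)` carrying the simple generators to `r₀, r₁, r₂`;
moreover `r₀r₂` has infinite order. -/
theorem Oplus21_coxeter_system :
    ∃ φ : triangleMatrix.Group →* (Matrix (Fin 3) (Fin 3) ℤ)ˣ,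
      Function.Injective φ ∧
      Set.range φ = Oplus21 ∧
      φ (triangleMatrix.simple 0) = refHE1E2 ∧
      φ (triangleMatrix.simple 1) = refE1E2 ∧
      φ (triangleMatrix.simple 2) = refE2 ∧
      ¬ IsOfFinOrder (refHE1E2 * refE2) :=
  ⟨TriangleGroup.rep, TriangleGroup.rep_injective, TriangleGroup.range_rep,
    TriangleGroup.rep_simple_zero, TriangleGroup.rep_simple_one, TriangleGroup.rep_simple_two,
    not_isOfFinOrder_refHE1E2_mul_refE2⟩
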